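/- Let λ₁, λ₂ ∈ ℂ with λᵢ ≠ 0, 1, −1. Let A,B,C₁,C₂ ∈ SL(2,ℂ) with [A,B]·C₁·C₂ = Id, where C₁ is conjugate in SL(2,ℂ) to ξ_{λ₁} and C₂ is conjugate to ξ_{λ₂}. Suppose P ∈ SL(2,ℂ), P ≠ Id and P ≠ −Id, commutes with each of A, B, C₁, C₂. Then [A,B] = Id, C₂ = C₁⁻¹, and λ₂ = λ₁ or λ₂ = λ₁⁻¹. -/

import Mathlib

open Matrix
open scoped commutatorElement

abbrev SL2C := Matrix.SpecialLinearGroup (Fin 2) ℂ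

/-- `ξ_λ = diag(λ, λ⁻¹)` as an element of SL(2,ℂ), for `λ ≠ 0`. -/
noncomputable def xi (l : ℂ) (hl : l ≠ 0) : SL2C :=
  ⟨!![l, 0; 0, l⁻¹], by simp [Matrix.det_fin_two_of, mul_inv_cancel₀ hl]⟩

/-! The centralizer of a non-scalar `P ∈ M₂(K)` is `K·1 + K·P`, hence commutative. An element
of `SL(2, K)` other than `±1` is not scalar, so `A` and `B` commute, `[A, B] = 1` and
`C₂ = C₁⁻¹`. Conjugate matrices and inverse matrices in `SL(2)` have equal traces, so
`λ₂ + λ₂⁻¹ = λ₁ + λ₁⁻¹`, i.e. `(λ₂ - λ₁)(λ₁λ₂ - 1) = 0`. -/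

namespace Matrix

lemma fin_two_entries_of_commute {R : Type*} [CommRing R] {P X : Matrix (Fin 2) (Fin 2) R}
    (h : Commute P X) :
    P 0 1 * X 1 0 = X 0 1 * P 1 0 ∧
      P 0 1 * (X 1 1 - X 0 0) = X 0 1 * (P 1 1 - P 0 0) ∧
      P 1 0 * (X 0 0 - X 1 1) = X 1 0 * (P 0 0 - P 1 1) := by
  have entry (i j : Fin 2) := congrFun (congrFun h.eq i) j
  simp only [mul_apply, Fin.sum_univ_two] at entry
  refine ⟨?_, ?_, ?_⟩
  · linear_combination entry 0 0
  · linear_combination entry 0 1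
  · linear_combination entry 1 0

lemma eq_smul_one_add_smul_iff_fin_two {R : Type*} [CommRing R] {P X : Matrix (Fin 2) (Fin 2) R}
    {a b : R} :
    X = a • 1 + b • P ↔ X 0 0 = a + b * P 0 0 ∧ X 0 1 = b * P 0 1 ∧ X 1 0 = b * P 1 0 ∧
      X 1 1 = a + b * P 1 1 := by
  rw [← Matrix.ext_iff]
  simp [Fin.forall_fin_two, and_assoc]

variable {K : Type*} [Field K]

lemma exists_eq_smul_one_add_smul_of_commute_fin_two {P X : Matrix (Fin 2) (Fin 2) K}
    (hP : ∀ c : K, P ≠ scalar (Fin 2) c) (h : Commute P X) : ∃ a b : K, X = a • 1 + b • P := by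
  suffices ∃ b, X 0 1 = b * P 0 1 ∧ X 1 0 = b * P 1 0 ∧ X 0 0 - X 1 1 = b * (P 0 0 - P 1 1) by
    obtain ⟨b, h01, h10, hd⟩ := this
    exact ⟨X 0 0 - b * P 0 0, b,
      eq_smul_one_add_smul_iff_fin_two.mpr ⟨by ring, h01, h10, by linear_combination -hd⟩⟩
  obtain ⟨h₁, h₂, h₃⟩ := fin_two_entries_of_commute h
  rcases ne_or_eq (P 0 1) 0 with h01 | h01
  · refine ⟨X 0 1 / P 0 1, ?_, ?_, ?_⟩ <;> field_simp
    · linear_combination h₁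
    · linear_combination -h₂
  rcases ne_or_eq (P 1 0) 0 with h10 | h10
  · refine ⟨X 1 0 / P 1 0, ?_, ?_, ?_⟩ <;> field_simp
    · linear_combination -h₁
    · linear_combination h₃
  have hd : P 0 0 - P 1 1 ≠ 0 := by
    refine fun hd => hP (P 0 0) (Matrix.ext fun i j => ?_)
    fin_cases i <;> fin_cases j <;> simp [h01, h10, (sub_eq_zero.mp hd).symm]
  refine ⟨(X 0 0 - X 1 1) / (P 0 0 - P 1 1), ?_, ?_, ?_⟩ <;> field_simp
  · linear_combination h₂
  · linear_combination -h₃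

lemma commute_of_commute_of_commute_fin_two {P X Y : Matrix (Fin 2) (Fin 2) K}
    (hP : ∀ c : K, P ≠ scalar (Fin 2) c) (hX : Commute P X) (hY : Commute P Y) :
    Commute X Y := by
  obtain ⟨a, b, rfl⟩ := exists_eq_smul_one_add_smul_of_commute_fin_two hP hX
  obtain ⟨c, d, rfl⟩ := exists_eq_smul_one_add_smul_of_commute_fin_two hP hY
  have hPY : Commute P (c • 1 + d • P) :=
    ((Commute.one_right P).smul_right c).add_right ((Commute.refl P).smul_right d)
  exact ((Commute.one_left _).smul_left a).add_left (hPY.smul_left b)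

end Matrix

namespace Matrix.SpecialLinearGroup

lemma trace_eq_of_isConj {n R : Type*} [Fintype n] [DecidableEq n] [CommRing R]
    {A B : SpecialLinearGroup n R} (h : IsConj A B) :
    trace (A : Matrix n n R) = trace (B : Matrix n n R) := by
  obtain ⟨c, rfl⟩ := isConj_iff.mp h
  rw [coe_mul, trace_mul_comm, ← coe_mul, inv_mul_cancel_left]

lemma trace_inv_fin_two {R : Type*} [CommRing R] (A : SpecialLinearGroup (Fin 2) R) :
    trace (↑A⁻¹ : Matrix (Fin 2) (Fin 2) R) = trace (A : Matrix (Fin 2) (Fin 2) R) := by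
  rw [coe_inv, adjugate_fin_two, trace_fin_two_of, trace_fin_two, add_comm]

variable {K : Type*} [Field K]

lemma coe_ne_scalar_of_ne_one_of_ne_neg_one {P : SpecialLinearGroup (Fin 2) K}
    (h₁ : P ≠ 1) (h₂ : P ≠ -1) (c : K) : (P : Matrix (Fin 2) (Fin 2) K) ≠ scalar (Fin 2) c := by
  intro hc
  have hsq : c ^ 2 = 1 := by simpa [hc] using P.prop
  rcases sq_eq_one_iff.mp hsq with rfl | rfl
  · exact h₁ (Subtype.ext (by simpa using hc))
  · exact h₂ (Subtype.ext (hc.trans (by rw [map_neg, map_one]; simp)))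

lemma commute_of_commute_of_commute_fin_two {P A B : SpecialLinearGroup (Fin 2) K}
    (h₁ : P ≠ 1) (h₂ : P ≠ -1) (hA : Commute P A) (hB : Commute P B) : Commute A B :=
  Subtype.ext <| Matrix.commute_of_commute_of_commute_fin_two
    (coe_ne_scalar_of_ne_one_of_ne_neg_one h₁ h₂) (congrArg Subtype.val hA)
    (congrArg Subtype.val hB)

end Matrix.SpecialLinearGroup

lemma eq_or_eq_inv_of_add_inv_eq_add_inv {K : Type*} [Field K] {a b : K} (ha : a ≠ 0) (hb : b ≠ 0)
    (h : b + b⁻¹ = a + a⁻¹) : b = a ∨ b = a⁻¹ := by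
  have : (b - a) * (a * b - 1) = 0 := by
    field_simp at h
    linear_combination h
  rcases mul_eq_zero.mp this with h' | h'
  · exact Or.inl (sub_eq_zero.mp h')
  · exact Or.inr (eq_inv_of_mul_eq_one_right (sub_eq_zero.mp h'))

lemma trace_xi (l : ℂ) (hl : l ≠ 0) : trace (xi l hl : Matrix (Fin 2) (Fin 2) ℂ) = l + l⁻¹ :=
  trace_fin_two_of _ _ _ _

theorem stmt7_general (l₁ l₂ : ℂ)
    (hl₁0 : l₁ ≠ 0)
    (hl₂0 : l₂ ≠ 0)
    (A B C₁ C₂ : SL2C)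
    (h : ⁅A, B⁆ * C₁ * C₂ = 1)
    (hC₁ : IsConj (xi l₁ hl₁0) C₁) (hC₂ : IsConj (xi l₂ hl₂0) C₂)
    (P : SL2C) (hP1 : P ≠ 1) (hP2 : P ≠ -1)
    (hPA : P * A = A * P) (hPB : P * B = B * P) :
    ⁅A, B⁆ = 1 ∧ C₂ = C₁⁻¹ ∧ (l₂ = l₁ ∨ l₂ = l₁⁻¹) := by
  have hAB : ⁅A, B⁆ = 1 := commutatorElement_eq_one_iff_commute.mpr <|
    SpecialLinearGroup.commute_of_commute_of_commute_fin_two hP1 hP2 hPA hPB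
  have hC : C₂ = C₁⁻¹ := by
    rw [hAB, one_mul] at h
    exact eq_inv_of_mul_eq_one_right h
  refine ⟨hAB, hC, eq_or_eq_inv_of_add_inv_eq_add_inv hl₁0 hl₂0 ?_⟩
  rw [← trace_xi _ hl₁0, ← trace_xi _ hl₂0, SpecialLinearGroup.trace_eq_of_isConj hC₁,
    SpecialLinearGroup.trace_eq_of_isConj hC₂, hC, SpecialLinearGroup.trace_inv_fin_two]

/-- If `[A,B]·C₁·C₂ = Id` with `C₁ ∼ ξ_{λ₁}`, `C₂ ∼ ξ_{λ₂}` and some `P ≠ ±Id` commutes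
with `A, B, C₁, C₂`, then `[A,B] = Id`, `C₂ = C₁⁻¹` and `λ₂ = λ₁` or `λ₂ = λ₁⁻¹`. -/
theorem stmt7 (l₁ l₂ : ℂ)
    (hl₁0 : l₁ ≠ 0) (hl₁1 : l₁ ≠ 1) (hl₁2 : l₁ ≠ -1)
    (hl₂0 : l₂ ≠ 0) (hl₂1 : l₂ ≠ 1) (hl₂2 : l₂ ≠ -1)
    (A B C₁ C₂ : SL2C)
    (h : ⁅A, B⁆ * C₁ * C₂ = 1)
    (hC₁ : IsConj (xi l₁ hl₁0) C₁) (hC₂ : IsConj (xi l₂ hl₂0) C₂)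
    (P : SL2C) (hP1 : P ≠ 1) (hP2 : P ≠ -1)
    (hPA : P * A = A * P) (hPB : P * B = B * P)
    (hPC₁ : P * C₁ = C₁ * P) (hPC₂ : P * C₂ = C₂ * P) :
    ⁅A, B⁆ = 1 ∧ C₂ = C₁⁻¹ ∧ (l₂ = l₁ ∨ l₂ = l₁⁻¹) :=
  stmt7_general l₁ l₂ hl₁0 hl₂0 A B C₁ C₂ h hC₁ hC₂ P hP1 hP2 hPA hPB
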